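/- A suffix item [β] is inserted in T_{j,k} (by the variant algorithm) if and only if some dotted item [A → α • β] is inserted in E_{i,j} (by the Earley algorithm) for some A, α, i, and moreover β ⇒* a_{j+1}⋯a_k. -/

import Mathlib

/-! Formalization of Earley parsing and the Nederhof–Satta variant. -/

variable {T N : Type}

/-- A context-free grammar: a start nonterminal and a set of productions. -/
structure CFG (T N : Type) where
  initial : N
  rules : Set (N × List (Symbol T N))

/-- One rewriting step of the grammar. -/
def CFG.Produces (g : CFG T N) (u v : List (Symbol T N)) : Prop :=
  ∃ A α p q, (A, α) ∈ g.rules ∧ u = p ++ [Symbol.nonterminal A] ++ q ∧ v = p ++ α ++ q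

/-- The derivation relation ⇒* (reflexive-transitive closure of rewriting). -/
def CFG.Derives (g : CFG T N) : List (Symbol T N) → List (Symbol T N) → Prop :=
  Relation.ReflTransGen g.Produces

/-- The language of the grammar: { w | S ⇒* w }. -/
def CFG.language (g : CFG T N) : Set (List T) :=
  { w | g.Derives [Symbol.nonterminal g.initial] (w.map Symbol.terminal) }

/-- `inputSlice w i j` is the substring a_{i+1}⋯a_j of `w` (0-based: w[i..j)), as symbols. -/
def inputSlice (w : List T) (i j : ℕ) : List (Symbol T N) :=
  ((w.take j).drop i).map Symbol.terminal

/-- The least Earley table: `Earley g w A α β i j` means the dotted item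
[A → α • β] is inserted in E_{i,j}. -/
inductive Earley (g : CFG T N) (w : List T) :
    N → List (Symbol T N) → List (Symbol T N) → ℕ → ℕ → Prop where
  | init {α} : (g.initial, α) ∈ g.rules → Earley g w g.initial [] α 0 0
  | predict {B α A β i j γ} : Earley g w B α (Symbol.nonterminal A :: β) i j →
      (A, γ) ∈ g.rules → Earley g w A [] γ j j
  | scan {A α a β i j} : Earley g w A α (Symbol.terminal a :: β) i j →
      w[j]? = some a → Earley g w A (α ++ [Symbol.terminal a]) β i (j + 1)
  | complete {A α B β i k γ j} : Earley g w A α (Symbol.nonterminal B :: β) i k →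
      Earley g w B γ [] k j → (B, γ) ∈ g.rules →
      Earley g w A (α ++ [Symbol.nonterminal B]) β i j

mutual
  /-- Forward part of the variant: `VarU g w β j` means suffix item [β] ∈ U_j. -/
  inductive VarU (g : CFG T N) (w : List T) : List (Symbol T N) → ℕ → Prop where
    | init {α} : (g.initial, α) ∈ g.rules → VarU g w α 0
    | predict {A β j γ} : VarU g w (Symbol.nonterminal A :: β) j →
        (A, γ) ∈ g.rules → VarU g w γ j
    | scan {a β j} : VarU g w (Symbol.terminal a :: β) j → w[j]? = some a →
        VarU g w β (j + 1)
    | complete {B β k γ j} : VarU g w (Symbol.nonterminal B :: β) k → (B, γ) ∈ g.rules →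
        VarT g w γ k j → VarU g w β j

  /-- Backward part of the variant: `VarT g w β j m` means suffix item [β] ∈ T_{j,m}. -/
  inductive VarT (g : CFG T N) (w : List T) : List (Symbol T N) → ℕ → ℕ → Prop where
    | empty {m} : VarU g w [] m → VarT g w [] m m
    | scan {a β j m} : VarU g w (Symbol.terminal a :: β) j → w[j]? = some a →
        VarT g w β (j + 1) m → VarT g w (Symbol.terminal a :: β) j m
    | complete {B β k γ j m} : VarU g w (Symbol.nonterminal B :: β) k → (B, γ) ∈ g.rules →
        VarT g w γ k j → VarT g w β j m → VarT g w (Symbol.nonterminal B :: β) k m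
end

/-! Both sides are equivalent to `Spans g w β j k`, a form of `β ⇒* a_{j+1}⋯a_k` in which the
derivation is cut along the symbols of `β`. A rewriting step can be undone on such a cut, so
`Spans` agrees with `⇒*`, and `T` is exactly `Spans` restricted to suffixes in `U`. The suffixes
in `U_j` are those after the dot of Earley items in column `j`: the variant's completion is
simulated by advancing an Earley dot over a `Spans`, and conversely the part of an Earley item
before the dot spans the input between its two indices, which lets the variant complete wherever
Earley does. -/

section Slices

variable {w : List T} {i j k : ℕ}

lemma inputSlice_self : inputSlice (N := N) w j j = [] := by
  simp [inputSlice]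

lemma inputSlice_append (hij : i ≤ j) (hjk : j ≤ k) :
    inputSlice (N := N) w i j ++ inputSlice w j k = inputSlice w i k := by
  have htake : w.take j = (w.take k).take j := by rw [List.take_take, min_eq_left hjk]
  rw [inputSlice, inputSlice, inputSlice, ← List.map_append, htake, List.drop_take]
  conv_rhs => rw [← List.take_append_drop (j - i) ((w.take k).drop i)]
  rw [List.drop_drop, Nat.add_sub_cancel' hij]

lemma inputSlice_eq_cons {a : T} (hjk : j < k) (ha : w[j]? = some a) :
    inputSlice (N := N) w j k = Symbol.terminal a :: inputSlice w (j + 1) k := by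
  obtain ⟨hjw, rfl⟩ := List.getElem?_eq_some_iff.mp ha
  have hj : j < (w.take k).length := by simp; omega
  simp [inputSlice, List.drop_eq_getElem_cons hj]

end Slices

namespace CFG

variable {g : CFG T N} {u v u' v' : List (Symbol T N)}

lemma Produces.of_rule {A : N} {γ : List (Symbol T N)} (hr : (A, γ) ∈ g.rules) :
    g.Produces [Symbol.nonterminal A] γ :=
  ⟨A, γ, [], [], hr, rfl, by simp⟩

lemma Produces.append_left (h : g.Produces u v) (p : List (Symbol T N)) :
    g.Produces (p ++ u) (p ++ v) := by
  obtain ⟨A, γ, p', q', hr, rfl, rfl⟩ := h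
  exact ⟨A, γ, p ++ p', q', hr, by simp, by simp⟩

lemma Produces.append_right (h : g.Produces u v) (q : List (Symbol T N)) :
    g.Produces (u ++ q) (v ++ q) := by
  obtain ⟨A, γ, p', q', hr, rfl, rfl⟩ := h
  exact ⟨A, γ, p', q' ++ q, hr, by simp, by simp⟩

lemma Derives.append (hu : g.Derives u u') (hv : g.Derives v v') :
    g.Derives (u ++ v) (u' ++ v') :=
  (hu.lift (· ++ v) fun _ _ h => h.append_right v).trans
    (hv.lift (u' ++ ·) fun _ _ h => h.append_left u')

end CFG

inductive Spans (g : CFG T N) (w : List T) : List (Symbol T N) → ℕ → ℕ → Prop where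
  | nil {j} : Spans g w [] j j
  | terminal {a β j k} : w[j]? = some a → Spans g w β (j + 1) k →
      Spans g w (Symbol.terminal a :: β) j k
  | nonterminal {B γ β j m k} : (B, γ) ∈ g.rules → Spans g w γ j m → Spans g w β m k →
      Spans g w (Symbol.nonterminal B :: β) j k

namespace Spans

variable {g : CFG T N} {w : List T} {α β u v : List (Symbol T N)} {i j k : ℕ}

lemma le (h : Spans g w β j k) : j ≤ k := by
  induction h <;> omega

lemma append (hα : Spans g w α i j) (hβ : Spans g w β j k) : Spans g w (α ++ β) i k := by
  revert hβ
  induction hα with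
  | nil => exact id
  | terminal ha _ ih => exact fun hβ => .terminal ha (ih hβ)
  | nonterminal hr hγ _ _ ih => exact fun hβ => .nonterminal hr hγ (ih hβ)

lemma exists_of_append (h : Spans g w (α ++ β) i k) :
    ∃ j, Spans g w α i j ∧ Spans g w β j k := by
  induction α generalizing i with
  | nil => exact ⟨i, .nil, h⟩
  | cons x α ih =>
    cases h with
    | terminal ha h =>
      obtain ⟨j, hα, hβ⟩ := ih h
      exact ⟨j, .terminal ha hα, hβ⟩
    | nonterminal hr hγ h =>
      obtain ⟨j, hα, hβ⟩ := ih h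
      exact ⟨j, .nonterminal hr hγ hα, hβ⟩

lemma of_produces (huv : g.Produces u v) (h : Spans g w v j k) : Spans g w u j k := by
  obtain ⟨A, γ, p, q, hr, rfl, rfl⟩ := huv
  obtain ⟨m, hpγ, hq⟩ := exists_of_append h
  obtain ⟨i, hp, hγ⟩ := exists_of_append hpγ
  exact (hp.append (.nonterminal hr hγ .nil)).append hq

lemma of_derives (huv : g.Derives u v) (h : Spans g w v j k) : Spans g w u j k := by
  induction huv using Relation.ReflTransGen.head_induction_on with
  | refl => exact h
  | head hstep _ ih => exact of_produces hstep ih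

lemma derives (h : Spans g w β j k) : g.Derives β (inputSlice w j k) := by
  induction h with
  | nil => rw [inputSlice_self]; exact .refl
  | terminal ha hβ ih =>
    rw [inputSlice_eq_cons (Nat.lt_of_succ_le hβ.le) ha]
    exact CFG.Derives.append (u := [_]) .refl ih
  | nonterminal hr hγ hβ ihγ ihβ =>
    rw [← inputSlice_append hγ.le hβ.le]
    exact .head (CFG.Produces.of_rule hr |>.append_right _) (ihγ.append ihβ)

end Spans

lemma spans_inputSlice {g : CFG T N} {w : List T} {j k : ℕ} (hjk : j ≤ k) (hk : k ≤ w.length) :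
    Spans g w (inputSlice w j k) j k := by
  induction h : k - j generalizing j with
  | zero =>
    obtain rfl : j = k := by omega
    rw [inputSlice_self]
    exact .nil
  | succ n ih =>
    have ha : w[j]? = some w[j] := List.getElem?_eq_getElem (by omega)
    rw [inputSlice_eq_cons (by omega) ha]
    exact .terminal ha (ih (by omega) (by omega))

lemma spans_iff_derives {g : CFG T N} {w : List T} {β : List (Symbol T N)} {j k : ℕ}
    (hjk : j ≤ k) (hk : k ≤ w.length) :
    Spans g w β j k ↔ g.Derives β (inputSlice w j k) :=
  ⟨Spans.derives, fun h => Spans.of_derives h (spans_inputSlice hjk hk)⟩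

namespace Earley

variable {g : CFG T N} {w : List T} {A : N} {α β : List (Symbol T N)} {i j k : ℕ}

lemma spans (h : Earley g w A α β i j) : Spans g w α i j := by
  induction h with
  | init => exact .nil
  | predict => exact .nil
  | scan _ ha ih => exact ih.append (.terminal ha .nil)
  | complete _ _ hr ih₁ ih₂ => exact ih₁.append (.nonterminal hr ih₂ .nil)

lemma advance (hβ : Spans g w β j k) (h : Earley g w A α β i j) :
    Earley g w A (α ++ β) [] i k := by
  induction hβ generalizing A α i with
  | nil => simpa using h
  | terminal ha _ ih => simpa using ih (h.scan ha)
  | nonterminal hr _ _ ihγ ihβ =>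
    simpa using ihβ (h.complete (by simpa using ihγ (h.predict hr)) hr)

end Earley

namespace VarT

variable {g : CFG T N} {w : List T}

lemma varU {β : List (Symbol T N)} {j k : ℕ} (h : VarT g w β j k) : VarU g w β j := by
  cases h <;> assumption

lemma spans {β : List (Symbol T N)} {j k : ℕ} (h : VarT g w β j k) : Spans g w β j k :=
  match h with
  | .empty _ => .nil
  | .scan _ ha h => .terminal ha h.spans
  | .complete _ hr hγ hβ => .nonterminal hr hγ.spans hβ.spans

lemma of_spans {β : List (Symbol T N)} {j k : ℕ} (h : Spans g w β j k) (hU : VarU g w β j) :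
    VarT g w β j k := by
  induction h with
  | nil => exact .empty hU
  | terminal ha _ ih => exact .scan hU ha (ih (hU.scan ha))
  | nonterminal hr _ _ ihγ ihβ =>
    have hγ := ihγ (hU.predict hr)
    exact .complete hU hr hγ (ihβ (hU.complete hr hγ))

end VarT

lemma VarU.exists_earley {g : CFG T N} {w : List T} {β : List (Symbol T N)} {j : ℕ}
    (h : VarU g w β j) : ∃ A α i, Earley g w A α β i j :=
  match h with
  | .init hr => ⟨_, _, _, .init hr⟩
  | .predict hU hr =>
    have ⟨_, _, _, hE⟩ := hU.exists_earley
    ⟨_, _, _, hE.predict hr⟩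
  | .scan hU ha =>
    have ⟨_, _, _, hE⟩ := hU.exists_earley
    ⟨_, _, _, hE.scan ha⟩
  | .complete hU hr hT =>
    have ⟨_, _, _, hE⟩ := hU.exists_earley
    ⟨_, _, _, hE.complete (by simpa using (hE.predict hr).advance hT.spans) hr⟩

lemma Earley.varU {g : CFG T N} {w : List T} {A : N} {α β : List (Symbol T N)} {i j : ℕ}
    (h : Earley g w A α β i j) : VarU g w β j := by
  induction h with
  | init hr => exact .init hr
  | predict _ hr ih => exact ih.predict hr
  | scan _ ha ih => exact ih.scan ha
  | complete _ hB hr ih _ =>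
    have hγ := ih.predict hr
    exact ih.complete hr (.of_spans hB.spans hγ)

/-- [β] ∈ T_{j,k} iff [A → α • β] ∈ E_{i,j} for some A, α, i,
and moreover β ⇒* a_{j+1}⋯a_k. -/
theorem variant_T_iff_earley (g : CFG T N) (w : List T)
    (β : List (Symbol T N)) (j k : ℕ) (hjk : j ≤ k) (hk : k ≤ w.length) :
    VarT g w β j k ↔
      (∃ A α i, Earley g w A α β i j) ∧ g.Derives β (inputSlice w j k) := by
  rw [← spans_iff_derives hjk hk]
  constructor
  · intro h
    exact ⟨h.varU.exists_earley, h.spans⟩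
  · rintro ⟨⟨A, α, i, hE⟩, hβ⟩
    exact .of_spans hβ hE.varU
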